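/- arXiv:1704.05191 — 2 statements merged into one kernel-verified Lean document; each statement's English description precedes it below -/
import Mathlib

section
/- Fix a positive integer t and let μ be a nonempty overpartition all of whose parts equal t with none overlined, having m parts. Then μ has exactly 2m pre-images under φ among overpartitions in G_t; exactly m of these pre-images have no overlined parts and the other m have exactly one overlined part (the first occurrence of the smallest part). -/
/-- An overpartition: a multiset of parts together with the finite set of
overlined part sizes. -/
abbrev OP : Type := Multiset ℕ × Finset ℕ

/-- Validity: all parts positive, and every overlined size actually occurs as a part
(so at most one part of each size is overlined). -/
def OP.IsValid (π : OP) : Prop := (∀ p ∈ π.1, 0 < p) ∧ ∀ p ∈ π.2, p ∈ π.1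

/-- The weight (sum of parts). -/
def OP.wt (π : OP) : ℕ := π.1.sum

/-- The number of parts. -/
def OP.len (π : OP) : ℕ := Multiset.card π.1

/-- The number of overlined parts. -/
def OP.o (π : OP) : ℕ := π.2.card

/-- The largest part. -/
def OP.maxPart (π : OP) : ℕ := π.1.sup

/-- The smallest part. -/
noncomputable def OP.minPart (π : OP) : ℕ := sInf {p | p ∈ π.1}

/-- The number of parts equal to `t`. -/
def OP.mT (t : ℕ) (π : OP) : ℕ := π.1.count t

/-- Membership in `G_t`: nonempty, valid, largest minus smallest part at most `t`,
and the largest part not overlined when this difference is exactly `t`. -/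
def InG (t : ℕ) (π : OP) : Prop :=
  π.IsValid ∧ π.1 ≠ 0 ∧ π.maxPart - π.minPart ≤ t ∧
    (π.maxPart - π.minPart = t → π.maxPart ∉ π.2)

/-- Membership in `P_t`: nonempty, valid, all parts at most `t`, no part `t` overlined. -/
def InP (t : ℕ) (π : OP) : Prop :=
  π.IsValid ∧ π.1 ≠ 0 ∧ (∀ p ∈ π.1, p ≤ t) ∧ t ∉ π.2

/-- The map `φ`: each part is replaced by its residue mod `t` (deleted if zero,
retaining its overline) together with `⌊part/t⌋` non-overlined copies of `t`. -/
def phi (t : ℕ) (π : OP) : OP :=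
  (Multiset.replicate (π.1.map (· / t)).sum t + (π.1.map (· % t)).filter (· ≠ 0),
   (π.2.image (· % t)).erase 0)

/-- Membership in `B_t`: bipartitions whose first component has all parts equal to `t`
(none overlined) and whose second component is a nonempty overpartition with parts `≤ t`. -/
def InB (t : ℕ) (b : Multiset ℕ × OP) : Prop :=
  (∀ a ∈ b.1, a = t) ∧ b.2.IsValid ∧ b.2.1 ≠ 0 ∧ ∀ p ∈ b.2.1, p ≤ t

/-- The map `ψ`: merge the two components, un-overlining any overlined `t`. -/
def psi (t : ℕ) (b : Multiset ℕ × OP) : OP := (b.1 + b.2.1, b.2.2.erase t)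

/-!
A preimage of `(t, …, t)` under `φ` has no nonzero residue mod `t`, so all its parts are
multiples of `t` and their quotients by `t` sum to `m`. In `G_t` these quotients differ by at
most one, so they form the balanced partition of `m` into `n` parts for some `1 ≤ n ≤ m`. An
overlined part above the smallest part would be a largest part exactly `t` above it, which `G_t`
forbids, so the only freedom left is whether the smallest part is overlined.
-/

open Multiset

/-- For `0 < n`, the multiset of `n` parts summing to `m` whose largest and smallest parts
differ by at most one. -/
def balancedParts (m n : ℕ) : Multiset ℕ :=
  replicate (n - m % n) (m / n) + replicate (m % n) (m / n + 1)

section BalancedParts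

variable {m n : ℕ}

lemma card_balancedParts (hn : 0 < n) : card (balancedParts m n) = n := by
  have := Nat.mod_lt m hn
  simp only [balancedParts, card_add, card_replicate]
  omega

lemma sum_balancedParts (m n : ℕ) : (balancedParts m n).sum = m := by
  simp only [balancedParts, sum_add, sum_replicate, smul_eq_mul]
  rcases n.eq_zero_or_pos with rfl | hn
  · simp
  have hlt := Nat.mod_lt m hn
  have hsub : (n - m % n) * (m / n) = n * (m / n) - m % n * (m / n) := Nat.sub_mul _ _ _
  have hle : m % n * (m / n) ≤ n * (m / n) := Nat.mul_le_mul_right _ hlt.le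
  have := Nat.div_add_mod m n
  rw [hsub, mul_add_one]
  omega

lemma mem_balancedParts {x : ℕ} (hx : x ∈ balancedParts m n) : x = m / n ∨ x = m / n + 1 :=
  (mem_add.1 hx).imp eq_of_mem_replicate eq_of_mem_replicate

lemma div_mem_balancedParts (hn : 0 < n) : m / n ∈ balancedParts m n :=
  mem_add.2 <| Or.inl <| mem_replicate.2 ⟨by have := Nat.mod_lt m hn; omega, rfl⟩

lemma balancedParts_eq_replicate_add_replicate (a : ℕ) {j : ℕ} (hj : 0 < j) (k : ℕ) :
    balancedParts ((j + k) * a + k) (j + k) = replicate j a + replicate k (a + 1) := by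
  have hk : k < j + k := by omega
  have hdiv : ((j + k) * a + k) / (j + k) = a := by
    rw [Nat.mul_add_div (by omega), Nat.div_eq_of_lt hk, add_zero]
  have hmod : ((j + k) * a + k) % (j + k) = k := by
    rw [Nat.mul_add_mod, Nat.mod_eq_of_lt hk]
  rw [balancedParts, hdiv, hmod, Nat.add_sub_cancel]

lemma eq_replicate_add_replicate_of_forall {s : Multiset ℕ} {a : ℕ}
    (h : ∀ x ∈ s, x = a ∨ x = a + 1) :
    s = replicate (count a s) a + replicate (count (a + 1) s) (a + 1) := by
  rw [← filter_eq', ← filter_eq']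
  conv_lhs => rw [← filter_add_not (· = a) s]
  congr 1
  refine filter_congr fun x hx => ?_
  rcases h x hx with rfl | rfl <;> simp

theorem eq_balancedParts_of_forall_le_add_one {s : Multiset ℕ}
    (h : ∀ x ∈ s, ∀ y ∈ s, x ≤ y + 1) : s = balancedParts s.sum (card s) := by
  rcases eq_or_ne s 0 with rfl | hs
  · simp [balancedParts]
  obtain ⟨a, ha, hmin⟩ := s.toFinset.exists_min_image id (by simpa using hs)
  simp only [mem_toFinset, id] at ha hmin
  have hdecomp := eq_replicate_add_replicate_of_forall fun x hx =>
    (by have := hmin x hx; have := h x hx a ha; omega : x = a ∨ x = a + 1)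
  have hj : 0 < count a s := count_pos.2 ha
  set j := count a s
  set k := count (a + 1) s
  rw [hdecomp]
  simp only [sum_add, sum_replicate, card_add, card_replicate, smul_eq_mul]
  rw [show j * a + k * (a + 1) = (j + k) * a + k by ring,
    balancedParts_eq_replicate_add_replicate a hj k]

end BalancedParts

namespace OP

variable {π : OP} {x : ℕ}

lemma minPart_le (hx : x ∈ π.1) : π.minPart ≤ x := Nat.sInf_le hx

lemma minPart_mem (h : π.1 ≠ 0) : π.minPart ∈ π.1 := Nat.sInf_mem (exists_mem_of_ne_zero h)

lemma minPart_eq (hx : x ∈ π.1) (h : ∀ y ∈ π.1, x ≤ y) : π.minPart = x :=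
  le_antisymm (minPart_le hx) (le_csInf ⟨x, hx⟩ h)

lemma le_maxPart (hx : x ∈ π.1) : x ≤ π.maxPart := le_sup hx

end OP

section InG

variable {t : ℕ} {π : OP}

lemma InG.le_add {x y : ℕ} (h : InG t π) (hx : x ∈ π.1) (hy : y ∈ π.1) : x ≤ y + t := by
  have := OP.le_maxPart hx
  have := OP.minPart_le hy
  have := h.2.2.1
  omega

lemma InG.eq_minPart_of_mem_overlined (h : InG t π) (hdvd : ∀ p ∈ π.1, t ∣ p) {p : ℕ}
    (hp : p ∈ π.2) : p = π.minPart := by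
  obtain ⟨⟨-, hsub⟩, hne, hdiff, hmax⟩ := h
  have hp₁ := hsub p hp
  have hmin := OP.minPart_mem hne
  have hle := OP.minPart_le hp₁
  have hpmax := OP.le_maxPart hp₁
  by_contra hne'
  have ht : t ≤ p - π.minPart :=
    Nat.le_of_dvd (by omega) (Nat.dvd_sub (hdvd p hp₁) (hdvd _ hmin))
  have hpeq : π.maxPart = p := by omega
  exact hmax (by omega) (hpeq ▸ hp)

lemma inG_of_subset_singleton_minPart (ht : 0 < t) (hv : π.IsValid) (hne : π.1 ≠ 0)
    (hdiff : π.maxPart - π.minPart ≤ t) (hsub : π.2 ⊆ {π.minPart}) : InG t π := by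
  refine ⟨hv, hne, hdiff, fun hdt hmax => ?_⟩
  have := Finset.mem_singleton.1 (hsub hmax)
  omega

end InG

lemma phi_eq_replicate_iff {t : ℕ} (ht : 0 < t) (π : OP) (m : ℕ) :
    phi t π = (replicate m t, ∅) ↔
      (∀ p ∈ π.1, t ∣ p) ∧ (∀ p ∈ π.2, t ∣ p) ∧ (π.1.map (· / t)).sum = m := by
  have hres : (π.1.map (· % t)).filter (· ≠ 0) = 0 ↔ ∀ p ∈ π.1, t ∣ p := by
    simp only [filter_eq_nil, forall_mem_map_iff, ne_eq, not_not, Nat.dvd_iff_mod_eq_zero]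
  have hover : (π.2.image (· % t)).erase 0 = ∅ ↔ ∀ p ∈ π.2, t ∣ p := by
    rw [Finset.erase_eq_empty_iff, ← Finset.subset_singleton_iff, Finset.image_subset_iff]
    simp only [Finset.mem_singleton, Nat.dvd_iff_mod_eq_zero]
  simp only [phi, Prod.mk.injEq, ← hres, ← hover]
  constructor
  · rintro ⟨h₁, h₂⟩
    have hzero : (π.1.map (· % t)).filter (· ≠ 0) = 0 := by
      refine eq_zero_of_forall_notMem fun r hr => ?_
      have hrt : r = t := eq_of_mem_replicate (h₁ ▸ mem_add.2 (Or.inr hr))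
      obtain ⟨hr, -⟩ := mem_filter.1 hr
      obtain ⟨p, -, rfl⟩ := mem_map.1 hr
      exact (Nat.mod_lt p ht).ne hrt
    rw [hzero, add_zero] at h₁
    exact ⟨hzero, h₂, replicate_left_injective t h₁⟩
  · rintro ⟨h₁, h₂, h₃⟩
    rw [h₁, h₃, add_zero]
    exact ⟨rfl, h₂⟩

lemma natCard_subtype_eq_card_of_injOn {α β : Type*} [DecidableEq β] {f : α → β}
    {s : Finset α} (hf : Set.InjOn f s) {P : β → Prop} (hP : ∀ y, P y ↔ ∃ x ∈ s, f x = y) :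
    Nat.card {y // P y} = s.card := by
  rw [Nat.card_congr (Equiv.subtypeEquivRight fun y => (hP y).trans Finset.mem_image.symm),
    Nat.card_eq_fintype_card, Fintype.card_coe, Finset.card_image_of_injOn hf]

/-- The preimage of `(t, …, t)` (`m` parts) under `φ` with `x.1` parts, whose smallest part is
overlined exactly when `x.2`. -/
def phiPreimage (t m : ℕ) (x : ℕ × Bool) : OP :=
  ((balancedParts m x.1).map (· * t), if x.2 then {m / x.1 * t} else ∅)

section PhiPreimage

variable {t m : ℕ}

lemma minPart_eq_of_fst_eq_balancedParts {π : OP} {n : ℕ} (hn : 0 < n)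
    (h : π.1 = (balancedParts m n).map (· * t)) : π.minPart = m / n * t := by
  refine OP.minPart_eq (h ▸ mem_map_of_mem _ (div_mem_balancedParts hn)) ?_
  rw [h, forall_mem_map_iff]
  intro y hy
  rcases mem_balancedParts hy with rfl | rfl <;> exact Nat.mul_le_mul_right _ (by omega)

lemma minPart_phiPreimage {x : ℕ × Bool} (hx : 0 < x.1) :
    (phiPreimage t m x).minPart = m / x.1 * t :=
  minPart_eq_of_fst_eq_balancedParts hx rfl

lemma snd_phiPreimage_subset {x : ℕ × Bool} (hx : 0 < x.1) :
    (phiPreimage t m x).2 ⊆ {(phiPreimage t m x).minPart} := by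
  rw [minPart_phiPreimage hx, phiPreimage]
  split_ifs <;> simp

lemma inG_phiPreimage (ht : 0 < t) {x : ℕ × Bool} (hx : x.1 ∈ Finset.Icc 1 m) :
    InG t (phiPreimage t m x) := by
  obtain ⟨hn, hnm⟩ := Finset.mem_Icc.1 hx
  have hq : 0 < m / x.1 := Nat.div_pos hnm hn
  have hne : (phiPreimage t m x).1 ≠ 0 := by
    rw [← card_pos, phiPreimage, card_map, card_balancedParts hn]
    exact hn
  have hmax : (phiPreimage t m x).maxPart ≤ (m / x.1 + 1) * t := by
    rw [OP.maxPart, Multiset.sup_le, phiPreimage, forall_mem_map_iff]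
    intro y hy
    rcases mem_balancedParts hy with rfl | rfl <;> exact Nat.mul_le_mul_right _ (by omega)
  refine inG_of_subset_singleton_minPart ht ⟨?_, fun p hp => ?_⟩ hne ?_ (snd_phiPreimage_subset hn)
  · rw [phiPreimage, forall_mem_map_iff]
    intro y hy
    rcases mem_balancedParts hy with rfl | rfl <;> positivity
  · rw [Finset.mem_singleton.1 (snd_phiPreimage_subset hn hp)]
    exact OP.minPart_mem hne
  · rw [minPart_phiPreimage hn]
    rw [add_one_mul] at hmax
    omega

lemma phi_phiPreimage (ht : 0 < t) {x : ℕ × Bool} (hx : 0 < x.1) :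
    phi t (phiPreimage t m x) = (replicate m t, ∅) := by
  refine (phi_eq_replicate_iff ht _ m).2 ⟨?_, fun p hp => ?_, ?_⟩
  · rw [phiPreimage, forall_mem_map_iff]
    exact fun y _ => dvd_mul_left t y
  · rw [Finset.mem_singleton.1 (snd_phiPreimage_subset hx hp), minPart_phiPreimage hx]
    exact dvd_mul_left t _
  · rw [phiPreimage, map_map]
    simp only [Function.comp_def, Nat.mul_div_cancel _ ht, map_id', sum_balancedParts]

lemma injOn_phiPreimage : Set.InjOn (phiPreimage t m) {x | 0 < x.1} := by
  rintro ⟨n, b⟩ hn ⟨n', b'⟩ hn' h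
  have hcard := congrArg (fun π : OP => card π.1) h
  simp only [phiPreimage, card_map, card_balancedParts hn, card_balancedParts hn'] at hcard
  subst hcard
  have hsnd := congrArg Prod.snd h
  cases b <;> cases b' <;> simp_all [phiPreimage]

lemma exists_phiPreimage_eq (ht : 0 < t) {π : OP} (hG : InG t π)
    (hphi : phi t π = (replicate m t, ∅)) :
    ∃ x ∈ Finset.Icc 1 m ×ˢ Finset.univ, phiPreimage t m x = π := by
  obtain ⟨hdvd, -, hsum⟩ := (phi_eq_replicate_iff ht π m).1 hphi
  set n := card π.1
  have hn : 0 < n := card_pos.2 hG.2.1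
  have hscale : π.1 = (π.1.map (· / t)).map (· * t) := by
    rw [map_map]
    conv_lhs => rw [← map_id π.1]
    exact map_congr rfl fun p hp => (Nat.div_mul_cancel (hdvd p hp)).symm
  have hquot : π.1.map (· / t) = balancedParts m n := by
    have hbal := eq_balancedParts_of_forall_le_add_one (s := π.1.map (· / t)) <| by
      simp only [forall_mem_map_iff]
      intro p hp p' hp'
      calc p / t ≤ (p' + t) / t := Nat.div_le_div_right (hG.le_add hp hp')
        _ = p' / t + 1 := Nat.add_div_right p' ht
    rwa [hsum, card_map] at hbal
  rw [hquot] at hscale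
  have hmin := minPart_eq_of_fst_eq_balancedParts hn hscale
  have hnm : n ≤ m := by
    have hpos := hG.1.1 _ (OP.minPart_mem hG.2.1)
    rw [hmin] at hpos
    exact (Nat.div_pos_iff.1 (Nat.pos_of_mul_pos_right hpos)).2
  have hsub : π.2 ⊆ {π.minPart} := fun p hp =>
    Finset.mem_singleton.2 (hG.eq_minPart_of_mem_overlined hdvd hp)
  rw [hmin] at hsub
  have hmem (b : Bool) : (n, b) ∈ Finset.Icc 1 m ×ˢ Finset.univ :=
    Finset.mem_product.2 ⟨Finset.mem_Icc.2 ⟨hn, hnm⟩, Finset.mem_univ b⟩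
  rcases Finset.subset_singleton_iff.1 hsub with hover | hover
  · exact ⟨(n, false), hmem false, Prod.ext hscale.symm hover.symm⟩
  · exact ⟨(n, true), hmem true, Prod.ext hscale.symm hover.symm⟩

theorem inG_and_phi_eq_replicate_iff (ht : 0 < t) {π : OP} :
    InG t π ∧ phi t π = (replicate m t, ∅) ↔
      ∃ x ∈ Finset.Icc 1 m ×ˢ Finset.univ, phiPreimage t m x = π := by
  refine ⟨fun h => exists_phiPreimage_eq ht h.1 h.2, ?_⟩
  rintro ⟨x, hx, rfl⟩
  have hx₁ := (Finset.mem_product.1 hx).1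
  exact ⟨inG_phiPreimage ht hx₁, phi_phiPreimage ht (Finset.mem_Icc.1 hx₁).1⟩

lemma injOn_phiPreimage_Icc (B : Finset Bool) :
    Set.InjOn (phiPreimage t m) ↑(Finset.Icc 1 m ×ˢ B) :=
  injOn_phiPreimage.mono fun _ hx => (Finset.mem_Icc.1 (Finset.mem_product.1 hx).1).1

lemma inG_and_phi_eq_replicate_and_iff (ht : 0 < t) {Q : OP → Prop} {b : Bool}
    (hQ : ∀ x : ℕ × Bool, 0 < x.1 → (Q (phiPreimage t m x) ↔ x.2 = b)) {π : OP} :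
    InG t π ∧ phi t π = (replicate m t, ∅) ∧ Q π ↔
      ∃ x ∈ Finset.Icc 1 m ×ˢ {b}, phiPreimage t m x = π := by
  rw [← and_assoc, inG_and_phi_eq_replicate_iff ht]
  constructor
  · rintro ⟨⟨x, hx, rfl⟩, hx'⟩
    have hx₁ := (Finset.mem_product.1 hx).1
    exact ⟨x, Finset.mem_product.2 ⟨hx₁, Finset.mem_singleton.2
      ((hQ x (Finset.mem_Icc.1 hx₁).1).1 hx')⟩, rfl⟩
  · rintro ⟨x, hx, rfl⟩
    obtain ⟨hx₁, hx₂⟩ := Finset.mem_product.1 hx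
    exact ⟨⟨x, Finset.mem_product.2 ⟨hx₁, Finset.mem_univ _⟩, rfl⟩,
      (hQ x (Finset.mem_Icc.1 hx₁).1).2 (Finset.mem_singleton.1 hx₂)⟩

lemma o_phiPreimage_eq_zero_iff (x : ℕ × Bool) : (phiPreimage t m x).o = 0 ↔ x.2 = false := by
  obtain ⟨n, _ | _⟩ := x <;> simp [OP.o, phiPreimage]

lemma snd_phiPreimage_eq_singleton_minPart_iff {x : ℕ × Bool} (hx : 0 < x.1) :
    (phiPreimage t m x).2 = {(phiPreimage t m x).minPart} ↔ x.2 = true := by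
  rw [minPart_phiPreimage hx]
  obtain ⟨n, _ | _⟩ := x <;> simp [phiPreimage]

end PhiPreimage

theorem preimages_all_parts_t_general (t : ℕ) (ht : 0 < t) (m : ℕ)
    (μ : OP) (hμ : μ = (Multiset.replicate m t, (∅ : Finset ℕ))) :
    Nat.card {π : OP // InG t π ∧ phi t π = μ} = 2 * m ∧
    Nat.card {π : OP // InG t π ∧ phi t π = μ ∧ π.o = 0} = m ∧
    Nat.card {π : OP // InG t π ∧ phi t π = μ ∧ π.2 = {π.minPart}} = m := by
  subst hμ
  refine ⟨?_, ?_, ?_⟩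
  · rw [natCard_subtype_eq_card_of_injOn (injOn_phiPreimage_Icc _)
      fun _ => inG_and_phi_eq_replicate_iff ht]
    simp [mul_comm]
  · rw [natCard_subtype_eq_card_of_injOn (injOn_phiPreimage_Icc _)
      fun _ => inG_and_phi_eq_replicate_and_iff ht (Q := (·.o = 0))
        fun x _ => o_phiPreimage_eq_zero_iff x]
    simp
  · rw [natCard_subtype_eq_card_of_injOn (injOn_phiPreimage_Icc _)
      fun _ => inG_and_phi_eq_replicate_and_iff ht (Q := fun π => π.2 = {π.minPart})
        fun _ => snd_phiPreimage_eq_singleton_minPart_iff]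
    simp

theorem preimages_all_parts_t (t : ℕ) (ht : 0 < t) (m : ℕ) (hm : 0 < m)
    (μ : OP) (hμ : μ = (Multiset.replicate m t, (∅ : Finset ℕ))) :
    Nat.card {π : OP // InG t π ∧ phi t π = μ} = 2 * m ∧
    Nat.card {π : OP // InG t π ∧ phi t π = μ ∧ π.o = 0} = m ∧
    Nat.card {π : OP // InG t π ∧ phi t π = μ ∧ π.2 = {π.minPart}} = m :=
  preimages_all_parts_t_general t ht m μ hμ
end

section
/- For every positive integer t, the two-variable generating function ∑_{n≥1}∑_{m≥0} g_t(m,n) z^m q^n specializes at z = 0 to (1/(1−q^t))·(1/(q;q)_t − 1), recovering the Breuer–Kronholm generating function for partitions with largest minus smallest part at most t. -/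
/-! With no overlined parts, `G_t` consists of the ordinary partitions whose largest and smallest
parts differ by at most `t`. Lowering the largest part `M > t` of such a partition to `M - t`
makes `M - t` its new smallest part, and this is inverted by raising the smallest part by `t`.
What remains are the partitions with largest part at most `t`, whose generating function is
`1 / (q;q)_t`. Hence the generating function `G` satisfies `(1 - q^t) G = 1 / (q;q)_t - 1`. -/

open PowerSeries
open scoped Finset

namespace Multiset

theorem sup_mem_of_ne_zero {α : Type*} [LinearOrder α] [OrderBot α] {s : Multiset α}
    (hs : s ≠ 0) : s.sup ∈ s := by
  induction s using Multiset.induction_on with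
  | empty => exact absurd rfl hs
  | cons a s ih =>
    rw [sup_cons]
    rcases eq_or_ne s 0 with rfl | hs'
    · simp
    · rcases max_choice a s.sup with h | h <;> rw [h]
      · exact mem_cons_self a s
      · exact mem_cons_of_mem (ih hs')

theorem sup_cons_eq_self {α : Type*} [SemilatticeSup α] [OrderBot α] {a : α} {s : Multiset α}
    (h : ∀ b ∈ s, b ≤ a) : (a ::ₘ s).sup = a := by
  rw [sup_cons, sup_eq_left.mpr (sup_le.mpr h)]

theorem sInf_cons_eq_self {α : Type*} [ConditionallyCompleteLattice α] {a : α} {s : Multiset α}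
    (h : ∀ b ∈ s, a ≤ b) : sInf {b | b ∈ a ::ₘ s} = a :=
  IsLeast.csInf_eq ⟨mem_cons_self a s, fun b hb => (mem_cons.mp hb).elim ge_of_eq (h b)⟩

theorem sInf_mem_of_ne_zero {s : Multiset ℕ} (hs : s ≠ 0) : sInf {b | b ∈ s} ∈ s :=
  Nat.sInf_mem (exists_mem_of_ne_zero hs)

end Multiset

open PowerSeries.WithPiTopology in
theorem Nat.Partition.powerSeriesMk_card_restricted_le_mul_prod (R : Type*) [CommRing R]
    (t : ℕ) :
    PowerSeries.mk (fun n ↦ (#(restricted n (· ≤ t)) : R)) *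
      ∏ k ∈ Finset.range t, (1 - X ^ (k + 1)) = 1 := by
  -- The identity is algebraic; a topology on `R` is only needed to use the product formula.
  let _ : TopologicalSpace R := ⊥
  have _ : DiscreteTopology R := ⟨rfl⟩
  have hprod := (hasProd_powerSeriesMk_card_restricted R (· ≤ t)).unique
    (hasProd_prod_of_ne_finset_one (s := Finset.range t) fun i hi => if_neg (by simpa using hi))
  rw [hprod, ← Finset.prod_mul_distrib]
  refine Finset.prod_eq_one fun i hi => ?_
  rw [if_pos (by simpa [Nat.succ_le_iff] using hi)]
  simp_rw [pow_mul]
  exact tsum_pow_mul_one_sub_of_constantCoeff_eq_zero (by simp)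

open Multiset

def spreadPartitions (t n : ℕ) : Set (Multiset ℕ) :=
  {l | (∀ i ∈ l, 0 < i) ∧ l ≠ 0 ∧ l.sum = n ∧ l.sup - sInf {i | i ∈ l} ≤ t}

def lowerLargest (t : ℕ) (l : Multiset ℕ) : Multiset ℕ :=
  (l.sup - t) ::ₘ l.erase l.sup

noncomputable def raiseSmallest (t : ℕ) (l : Multiset ℕ) : Multiset ℕ :=
  (sInf {i | i ∈ l} + t) ::ₘ l.erase (sInf {i | i ∈ l})

theorem spreadPartitions_finite (t n : ℕ) : (spreadPartitions t n).Finite :=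
  (Set.finite_range (Nat.Partition.parts (n := n))).subset
    fun l ⟨hpos, _, hsum, _⟩ => ⟨⟨l, hpos _, hsum⟩, rfl⟩

theorem spreadPartitions_zero (t : ℕ) : spreadPartitions t 0 = ∅ :=
  Set.eq_empty_of_forall_notMem fun _ ⟨hpos, hne, hsum, _⟩ =>
    have hmin := sInf_mem_of_ne_zero hne
    (hpos _ hmin).ne' (sum_eq_zero_iff.mp hsum _ hmin)

section Spread

variable {t n : ℕ} {l : Multiset ℕ}

theorem sInf_lowerLargest (h : l.sup - sInf {i | i ∈ l} ≤ t) :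
    sInf {i | i ∈ lowerLargest t l} = l.sup - t :=
  sInf_cons_eq_self fun b hb => by
    have := Nat.sInf_le (s := {i | i ∈ l}) (mem_of_mem_erase hb)
    omega

theorem sup_raiseSmallest (h : l.sup - sInf {i | i ∈ l} ≤ t) :
    (raiseSmallest t l).sup = sInf {i | i ∈ l} + t :=
  sup_cons_eq_self fun b hb => by
    have := le_sup (mem_of_mem_erase hb)
    omega

theorem mapsTo_lowerLargest :
    Set.MapsTo (lowerLargest t) (spreadPartitions t (n + t) ∩ {l | t < l.sup})
      (spreadPartitions t n) := by
  rintro l ⟨⟨hpos, hne, hsum, hspread⟩, hbig : t < l.sup⟩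
  have hmax := sup_mem_of_ne_zero hne
  refine ⟨fun i hi => ?_, cons_ne_zero, ?_, ?_⟩
  · rcases mem_cons.mp hi with rfl | hi
    · omega
    · exact hpos i (mem_of_mem_erase hi)
  · have := sum_erase hmax
    rw [lowerLargest, sum_cons]
    omega
  · have : (lowerLargest t l).sup ≤ l.sup :=
      sup_le.mpr fun b hb => (mem_cons.mp hb).elim (fun h => h ▸ Nat.sub_le _ _)
        fun hb => le_sup (mem_of_mem_erase hb)
    rw [sInf_lowerLargest hspread]
    omega

theorem mapsTo_raiseSmallest (ht : 0 < t) :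
    Set.MapsTo (raiseSmallest t) (spreadPartitions t n)
      (spreadPartitions t (n + t) ∩ {l | t < l.sup}) := by
  rintro l ⟨hpos, hne, hsum, hspread⟩
  have hmin := sInf_mem_of_ne_zero hne
  have hmin_le : sInf {i | i ∈ l} ≤ sInf {i | i ∈ raiseSmallest t l} :=
    le_csInf ⟨_, mem_cons_self _ _⟩ fun b hb => (mem_cons.mp hb).elim (fun h => h ▸ by omega)
      fun hb => Nat.sInf_le (mem_of_mem_erase hb)
  refine ⟨⟨fun i hi => ?_, cons_ne_zero, ?_, ?_⟩, ?_⟩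
  · rcases mem_cons.mp hi with rfl | hi
    · omega
    · exact hpos i (mem_of_mem_erase hi)
  · have := sum_erase hmin
    rw [raiseSmallest, sum_cons]
    omega
  · rw [sup_raiseSmallest hspread]
    omega
  · show t < (raiseSmallest t l).sup
    rw [sup_raiseSmallest hspread]
    have := hpos _ hmin
    omega

theorem raiseSmallest_lowerLargest (hne : l ≠ 0) (hspread : l.sup - sInf {i | i ∈ l} ≤ t)
    (hbig : t < l.sup) : raiseSmallest t (lowerLargest t l) = l := by
  rw [raiseSmallest, sInf_lowerLargest hspread, Nat.sub_add_cancel hbig.le, lowerLargest,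
    erase_cons_head, cons_erase (sup_mem_of_ne_zero hne)]

theorem lowerLargest_raiseSmallest (hne : l ≠ 0) (hspread : l.sup - sInf {i | i ∈ l} ≤ t) :
    lowerLargest t (raiseSmallest t l) = l := by
  rw [lowerLargest, sup_raiseSmallest hspread, Nat.add_sub_cancel, raiseSmallest,
    erase_cons_head, cons_erase (sInf_mem_of_ne_zero hne)]

theorem ncard_spreadPartitions_inter_lt_sup (ht : 0 < t) (n : ℕ) :
    (spreadPartitions t (n + t) ∩ {l | t < l.sup}).ncard = (spreadPartitions t n).ncard :=
  Set.BijOn.ncard_eq <| Set.InvOn.bijOn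
    ⟨fun _ ⟨⟨_, hne, _, hspread⟩, hbig⟩ => raiseSmallest_lowerLargest hne hspread hbig,
      fun _ ⟨_, hne, _, hspread⟩ => lowerLargest_raiseSmallest hne hspread⟩
    mapsTo_lowerLargest (mapsTo_raiseSmallest ht)

theorem spreadPartitions_inter_lt_sup_of_lt (h : n < t) :
    spreadPartitions t n ∩ {l | t < l.sup} = ∅ :=
  Set.eq_empty_of_forall_notMem fun l ⟨⟨_, hne, hsum, _⟩, (hbig : t < l.sup)⟩ => by
    have := le_sum_of_mem (sup_mem_of_ne_zero hne)
    omega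

theorem spreadPartitions_sdiff_lt_sup (hn : 0 < n) :
    spreadPartitions t n \ {l | t < l.sup} =
      Nat.Partition.parts '' (Nat.Partition.restricted n (· ≤ t) : Set n.Partition) := by
  ext l
  simp only [Set.mem_sdiff, Set.mem_ofPred_eq, not_lt, Set.mem_image, Finset.mem_coe,
    Nat.Partition.restricted, Finset.mem_filter, Finset.mem_univ, true_and]
  constructor
  · rintro ⟨⟨hpos, _, hsum, _⟩, hsup⟩
    exact ⟨⟨l, hpos _, hsum⟩, fun i hi => (le_sup hi).trans hsup, rfl⟩
  · rintro ⟨p, hp, rfl⟩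
    have hne : p.parts ≠ 0 := by
      rintro h
      have := p.parts_sum
      rw [h, sum_zero] at this
      omega
    have hsup := sup_le.mpr hp
    exact ⟨⟨fun _ hi => p.parts_pos hi, hne, p.parts_sum, by omega⟩, hsup⟩

theorem ncard_spreadPartitions (ht : 0 < t) (hn : 0 < n) :
    (spreadPartitions t n).ncard = (if t ≤ n then (spreadPartitions t (n - t)).ncard else 0) +
      #(Nat.Partition.restricted n (· ≤ t)) := by
  rw [← Set.ncard_inter_add_ncard_sdiff_eq_ncard _ {l | t < l.sup} (spreadPartitions_finite t n),
    spreadPartitions_sdiff_lt_sup hn, Set.ncard_image_of_injective _ fun _ _ => Nat.Partition.ext,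
    Set.ncard_coe_finset]
  congr 1
  split_ifs with h
  · obtain ⟨m, rfl⟩ := Nat.exists_eq_add_of_le' h
    rw [Nat.add_sub_cancel, ncard_spreadPartitions_inter_lt_sup ht]
  · rw [spreadPartitions_inter_lt_sup_of_lt (not_le.mp h), Set.ncard_empty]

end Spread

theorem one_sub_X_pow_mul_mk_ncard_spreadPartitions (R : Type*) [CommRing R] {t : ℕ}
    (ht : 0 < t) :
    (1 - X ^ t) * PowerSeries.mk (fun n => ((spreadPartitions t n).ncard : R)) =
      PowerSeries.mk (fun n => (#(Nat.Partition.restricted n (· ≤ t)) : R)) - 1 := by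
  ext n
  rw [sub_mul, one_mul, map_sub, map_sub, coeff_X_pow_mul', coeff_one]
  simp only [coeff_mk]
  rcases n.eq_zero_or_pos with rfl | hn
  · simp [spreadPartitions_zero, ht.ne', Nat.Partition.restricted]
  · rw [ncard_spreadPartitions ht hn, if_neg hn.ne']
    push_cast
    split_ifs <;> ring

theorem mk_ncard_spreadPartitions {t : ℕ} (ht : 0 < t) :
    PowerSeries.mk (fun n => ((spreadPartitions t n).ncard : ℚ)) =
      (1 - X ^ t)⁻¹ * ((∏ k ∈ Finset.range t, (1 - X ^ (k + 1) : ℚ⟦X⟧))⁻¹ - 1) := by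
  have hcoeff : constantCoeff (1 - X ^ t : ℚ⟦X⟧) ≠ 0 := by simp [ht.ne']
  have hprod : (∏ k ∈ Finset.range t, (1 - X ^ (k + 1) : ℚ⟦X⟧))⁻¹ =
      PowerSeries.mk (fun n ↦ (#(Nat.Partition.restricted n (· ≤ t)) : ℚ)) :=
    ((eq_inv_iff_mul_eq_one (by simp [map_prod])).mpr
      (Nat.Partition.powerSeriesMk_card_restricted_le_mul_prod ℚ t)).symm
  rw [hprod, mul_comm, eq_mul_inv_iff_mul_eq hcoeff, mul_comm,
    one_sub_X_pow_mul_mk_ncard_spreadPartitions ℚ ht]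

def overpartitionsNoOverlineEquiv (t n : ℕ) :
    {π : OP // InG t π ∧ π.wt = n ∧ π.o = 0} ≃ spreadPartitions t n where
  toFun π := ⟨π.1.1, by
    obtain ⟨⟨⟨hpos, _⟩, hne, hspread, _⟩, hwt, _⟩ := π.2
    exact ⟨hpos, hne, hwt, hspread⟩⟩
  invFun l := ⟨(l.1, ∅), by
    obtain ⟨hpos, hne, hsum, hspread⟩ := l.2
    exact ⟨⟨⟨hpos, by simp⟩, hne, hspread, by simp⟩, hsum, rfl⟩⟩
  left_inv π := Subtype.ext (Prod.ext rfl (Finset.card_eq_zero.mp π.2.2.2).symm)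
  right_inv _ := rfl

theorem specialization_z_zero (t : ℕ) (ht : 0 < t) :
    (PowerSeries.mk fun n =>
        (Nat.card {π : OP // InG t π ∧ π.wt = n ∧ π.o = 0} : ℚ)) =
      (1 - PowerSeries.X ^ t)⁻¹ *
        ((∏ k ∈ Finset.range t, (1 - PowerSeries.X ^ (k + 1) : PowerSeries ℚ))⁻¹ - 1) ∧
    ∀ n : ℕ, Nat.card {π : OP // InG t π ∧ π.wt = n ∧ π.o = 0} =
      Nat.card {lam : Multiset ℕ // (∀ p ∈ lam, 0 < p) ∧ lam ≠ 0 ∧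
        lam.sum = n ∧ lam.sup - sInf {p | p ∈ lam} ≤ t} := by
  refine ⟨?_, fun n => Nat.card_congr (overpartitionsNoOverlineEquiv t n)⟩
  simp_rw [Nat.card_congr (overpartitionsNoOverlineEquiv _ _), Nat.card_coe_set_eq]
  exact mk_ncard_spreadPartitions ht
end
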